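/- Let ε ∈ (0,1), λ(t) = ε(1-t²)² and f₀(t) = exp(-1/(1-t²)) on (-1,1). Then there exists a constant C > 0 independent of ε such that |λ(t)λ'(t) f₀(t)| + λ(t)²|f₀'(t)| ≤ C ε² f₀(t) for all t ∈ (-1,1). -/

import Mathlib

/-! With `u = 1 - t²`, one has `λ λ' f₀ = -4 ε² t u³ f₀` and `λ² f₀' = -2 ε² t u² f₀`: the factor
`u⁻²` produced by differentiating `f₀` is absorbed by `λ² = ε² u⁴`. Since `|t| ≤ 1` and `0 < u ≤ 1`,
the left-hand side is at most `(4 + 2) ε² f₀`. -/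

open Real

lemma hasDerivAt_one_sub_sq (t : ℝ) : HasDerivAt (fun s : ℝ => 1 - s ^ 2) (-(2 * t)) t := by
  simpa using (hasDerivAt_pow 2 t).const_sub 1

lemma hasDerivAt_const_mul_one_sub_sq_sq (c t : ℝ) :
    HasDerivAt (fun s : ℝ => c * (1 - s ^ 2) ^ 2) (-(4 * c * t * (1 - t ^ 2))) t := by
  refine (((hasDerivAt_one_sub_sq t).fun_pow 2).const_mul c).congr_deriv ?_
  push_cast
  ring

lemma hasDerivAt_exp_neg_one_div_one_sub_sq {t : ℝ} (ht : 1 - t ^ 2 ≠ 0) :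
    HasDerivAt (fun s : ℝ => exp (-1 / (1 - s ^ 2)))
      (-(2 * t) / (1 - t ^ 2) ^ 2 * exp (-1 / (1 - t ^ 2))) t := by
  have hinner := (hasDerivAt_const t (-1 : ℝ)).fun_div (hasDerivAt_one_sub_sq t) ht
  convert hinner.exp using 1
  ring

theorem stmt_10 :
    ∃ C > (0 : ℝ), ∀ ε : ℝ, 0 < ε → ε < 1 → ∀ t ∈ Set.Ioo (-1 : ℝ) 1,
      |(ε * (1 - t ^ 2) ^ 2) * deriv (fun s : ℝ => ε * (1 - s ^ 2) ^ 2) t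
          * Real.exp (-1 / (1 - t ^ 2))|
        + (ε * (1 - t ^ 2) ^ 2) ^ 2 * |deriv (fun s : ℝ => Real.exp (-1 / (1 - s ^ 2))) t|
      ≤ C * ε ^ 2 * Real.exp (-1 / (1 - t ^ 2)) := by
  refine ⟨6, by norm_num, fun ε hε _ t ht => ?_⟩
  have ht_abs : |t| ≤ 1 := abs_le.2 ⟨ht.1.le, ht.2.le⟩
  have hu_pos : 0 < 1 - t ^ 2 := by nlinarith [ht.1, ht.2]
  have hu_le : 1 - t ^ 2 ≤ 1 := by nlinarith
  rw [(hasDerivAt_const_mul_one_sub_sq_sq ε t).deriv,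
    (hasDerivAt_exp_neg_one_div_one_sub_sq hu_pos.ne').deriv]
  set u := 1 - t ^ 2
  set E := exp (-1 / u)
  have hE : 0 < E := exp_pos _
  calc _ = (4 * u ^ 3 + 2 * u ^ 2) * |t| * ε ^ 2 * E := by
        simp only [abs_mul, abs_neg, abs_div, abs_pow, abs_of_pos hu_pos, abs_of_pos hE,
          abs_of_pos hε, abs_two]
        field_simp
        ring
    _ ≤ (4 * 1 + 2 * 1) * 1 * ε ^ 2 * E := by gcongr <;> simp [pow_le_one₀, hu_pos.le, hu_le]
    _ = 6 * ε ^ 2 * E := by norm_num
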